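/- arXiv:0711.4144 — 6 statements merged into one kernel-verified Lean document; each statement's English description precedes it below -/
import Mathlib

section
/- For every k ≥ 1 and every nonzero complex number q, one has P_{k-1}(q) = q^{2k} · p_{k-1}(q + q^{-1}), where P_{k-1} and p_{k-1} are the polynomials defined in the context. -/
open Polynomial

/-- For `k ≥ 1`, the polynomial `P_{k-1}(q) = 1 + ∑_{l=1}^{k} (q⁴−q³−q²−q)·q^{4(l−1)}`,
here `Pm1 k` denotes `P_{k-1}`. -/
noncomputable def Pm1 (k : ℕ) : Polynomial ℤ :=
  1 + ∑ l ∈ Finset.range k, (X ^ 4 - X ^ 3 - X ^ 2 - X) * X ^ (4 * l)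

/-- The polynomials `p_k` defined by `p₀ = x²−x−3`, `p₁ = (x³−2x²−3x+5)(x+1)`,
`p_k = (x²−2)·p_{k-1} − p_{k-2}`. -/
noncomputable def pp : ℕ → Polynomial ℤ
  | 0 => X ^ 2 - X - 3
  | 1 => (X ^ 3 - 2 * X ^ 2 - 3 * X + 5) * (X + 1)
  | (k + 2) => (X ^ 2 - 2) * pp (k + 1) - pp k

/-!
Both sides, viewed as sequences in `k`, satisfy the recurrence
`u (k + 2) = (1 + q⁴) u (k + 1) - q⁴ u k`, whose characteristic roots are `1` and `q⁴`.
For `P` this holds because consecutive differences form a geometric progression of ratio `q⁴`;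
for the right-hand side it is the recurrence of `p` multiplied by `q^{2(k+2)}`, using
`q² ((q + q⁻¹)² - 2) = q⁴ + 1`. So it remains to compare the first two terms.
-/

lemma Pm1_add_two (k : ℕ) : Pm1 (k + 2) = (1 + X ^ 4) * Pm1 (k + 1) - X ^ 4 * Pm1 k := by
  simp only [Pm1, Finset.sum_range_succ]
  ring

lemma aeval_pp_add_two {R : Type*} [CommRing R] (x : R) (k : ℕ) :
    aeval x (pp (k + 2)) = (x ^ 2 - 2) * aeval x (pp (k + 1)) - aeval x (pp k) := by
  simp only [pp, map_sub, map_mul, map_pow, aeval_X, map_ofNat]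

section Field

variable {K : Type*} [Field K]

lemma sq_mul_add_inv_sq_sub_two {q : K} (hq : q ≠ 0) : q ^ 2 * ((q + q⁻¹) ^ 2 - 2) = q ^ 4 + 1 := by
  field_simp
  ring

def quarticRecurrence (q : K) : LinearRecurrence K := ⟨2, ![-q ^ 4, 1 + q ^ 4]⟩

lemma isSolution_quarticRecurrence_iff (q : K) (u : ℕ → K) :
    (quarticRecurrence q).IsSolution u ↔ ∀ n, u (n + 2) = (1 + q ^ 4) * u (n + 1) - q ^ 4 * u n := by
  refine forall_congr' fun n => ?_
  change u (n + 2) = ∑ i : Fin 2, ![-q ^ 4, 1 + q ^ 4] i * u (n + i) ↔ _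
  simp only [Fin.sum_univ_two, Fin.val_zero, Fin.val_one, add_zero, Matrix.cons_val_zero,
    Matrix.cons_val_one, Matrix.cons_val_fin_one]
  constructor <;> intro h <;> linear_combination h

lemma isSolution_aeval_Pm1 (q : K) :
    (quarticRecurrence q).IsSolution fun n => aeval q (Pm1 (n + 1)) := by
  rw [isSolution_quarticRecurrence_iff]
  intro n
  simp [Pm1_add_two]

lemma isSolution_aeval_pp {q : K} (hq : q ≠ 0) :
    (quarticRecurrence q).IsSolution fun n => q ^ (2 * (n + 1)) * aeval (q + q⁻¹) (pp n) := by
  rw [isSolution_quarticRecurrence_iff]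
  intro n
  rw [aeval_pp_add_two]
  linear_combination q ^ (2 * (n + 2)) * aeval (q + q⁻¹) (pp (n + 1)) * sq_mul_add_inv_sq_sub_two hq

theorem aeval_Pm1_succ {q : K} (hq : q ≠ 0) (n : ℕ) :
    aeval q (Pm1 (n + 1)) = q ^ (2 * (n + 1)) * aeval (q + q⁻¹) (pp n) := by
  refine congrFun ((LinearRecurrence.eq_iff_eqOn_range_order _ _ _
    (isSolution_aeval_Pm1 q) (isSolution_aeval_pp hq)).mpr fun m hm => ?_) n
  replace hm : m < 2 := Finset.mem_range.mp hm
  interval_cases m <;>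
  · simp only [Pm1, pp, Finset.sum_range_succ, Finset.sum_range_zero, map_add, map_sub, map_mul,
      map_pow, map_zero, map_one, map_ofNat, aeval_X]
    field_simp
    ring

end Field

/-- For every `k ≥ 1` and nonzero `q : ℂ`,
`P_{k-1}(q) = q^{2k} · p_{k-1}(q + q⁻¹)`. -/
theorem stmt_3 (k : ℕ) (hk : 1 ≤ k) (q : ℂ) (hq : q ≠ 0) :
    Polynomial.aeval q (Pm1 k) =
      q ^ (2 * k) * Polynomial.aeval (q + q⁻¹) (pp (k - 1)) := by
  obtain ⟨n, rfl⟩ := Nat.exists_eq_add_of_le' hk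
  simpa using aeval_Pm1_succ hq n
end

section
/- For every k ≥ 0, the polynomial P_k has exactly one real root α in the open interval (0,1), and exactly one real root α' in the interval (1, ∞). -/
/-!
`P_k` is palindromic of degree `4(k+1)`, so `x ↦ x⁻¹` matches its roots in `(0,1)` with those
in `(1,∞)`. On `[0,1]` each summand `(x⁴-x³-x²-x)·x^{4l}` is nonpositive and antitone, strictly so
for `l = 0`; hence `P_k` decreases strictly from `P_k(0) = 1` to `P_k(1) = -1-2k` and has exactly
one root in `(0,1)`.
-/

open Polynomial

open Set

lemma Pm1_zero : Pm1 0 = 1 := by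
  simp [Pm1]

section CommRing

variable {R : Type*} [CommRing R] (x : R)

lemma aeval_Pm1 (n : ℕ) :
    aeval x (Pm1 n) = 1 + ∑ l ∈ Finset.range n, (x ^ 4 - x ^ 3 - x ^ 2 - x) * x ^ (4 * l) := by
  simp [Pm1]

lemma aeval_Pm1_succ_s4 (n : ℕ) :
    aeval x (Pm1 (n + 1)) = aeval x (Pm1 n) + (x ^ 4 - x ^ 3 - x ^ 2 - x) * x ^ (4 * n) := by
  rw [aeval_Pm1, aeval_Pm1, Finset.sum_range_succ, add_assoc]

lemma sub_one_mul_aeval_Pm1 (n : ℕ) :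
    (x ^ 4 - 1) * aeval x (Pm1 n) = x ^ 4 - 1 + (x ^ 4 - x ^ 3 - x ^ 2 - x) * (x ^ (4 * n) - 1) := by
  induction n with
  | zero => simp [Pm1_zero]
  | succ n ih =>
    rw [aeval_Pm1_succ_s4, mul_add, ih, mul_add 4 n, pow_add]
    ring

lemma aeval_Pm1_at_zero (n : ℕ) : aeval (0 : R) (Pm1 n) = 1 := by
  simp [aeval_Pm1]

lemma aeval_Pm1_at_one (n : ℕ) : aeval (1 : R) (Pm1 n) = 1 - 2 * n := by
  induction n with
  | zero => simp [Pm1_zero]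
  | succ n ih =>
    rw [aeval_Pm1_succ_s4, ih]
    push_cast
    ring

end CommRing

section Field

variable {K : Type*} [Field K] {x : K}

lemma aeval_Pm1_eq_pow_mul_aeval_inv (hx : x ≠ 0) (n : ℕ) :
    aeval x (Pm1 n) = x ^ (4 * n) * aeval x⁻¹ (Pm1 n) := by
  induction n with
  | zero => simp [Pm1_zero]
  | succ n ih =>
    have hxn : x ^ (4 * n) * x⁻¹ ^ (4 * n) = 1 := by rw [← mul_pow, mul_inv_cancel₀ hx, one_pow]
    have hx4 : x ^ 4 * (x⁻¹ ^ 4 - x⁻¹ ^ 3 - x⁻¹ ^ 2 - x⁻¹) = 1 - x - x ^ 2 - x ^ 3 := by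
      field_simp
    rw [aeval_Pm1_succ_s4, aeval_Pm1_succ_s4, mul_add 4 n, pow_add]
    linear_combination x ^ 4 * ih - x ^ (4 * n) * x⁻¹ ^ (4 * n) * hx4
      - (1 - x - x ^ 2 - x ^ 3) * hxn - sub_one_mul_aeval_Pm1 x n

lemma aeval_inv_Pm1_eq_zero_iff (hx : x ≠ 0) (n : ℕ) :
    aeval x⁻¹ (Pm1 n) = 0 ↔ aeval x (Pm1 n) = 0 := by
  rw [aeval_Pm1_eq_pow_mul_aeval_inv hx, mul_eq_zero, or_iff_right (pow_ne_zero _ hx)]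

end Field

lemma quartic_strictAntiOn : StrictAntiOn (fun x : ℝ => x ^ 4 - x ^ 3 - x ^ 2 - x) (Icc 0 1) := by
  rintro x ⟨hx0, hx1⟩ y ⟨hy0, hy1⟩ hxy
  have hxy0 := mul_nonneg hx0 hy0
  -- the difference of the two sides below is `(y - x)` times this factor
  have hfactor : 0 < 1 + (x + y) + (x ^ 2 + x * y + y ^ 2) - (x + y) * (x ^ 2 + y ^ 2) := by
    nlinarith [mul_nonneg (mul_nonneg hx0 hx0) (sub_nonneg.2 hx1),
      mul_nonneg (mul_nonneg hy0 hy0) (sub_nonneg.2 hy1),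
      mul_nonneg hxy0 (sub_nonneg.2 hx1), mul_nonneg hxy0 (sub_nonneg.2 hy1)]
  show y ^ 4 - y ^ 3 - y ^ 2 - y < x ^ 4 - x ^ 3 - x ^ 2 - x
  nlinarith [mul_pos (sub_pos.2 hxy) hfactor]

lemma quartic_mul_pow_le {x y : ℝ} (hx : 0 ≤ x) (hxy : x ≤ y) (hy : y ≤ 1) (m : ℕ) :
    (y ^ 4 - y ^ 3 - y ^ 2 - y) * y ^ m ≤ (x ^ 4 - x ^ 3 - x ^ 2 - x) * x ^ m := by
  have hy' : y ∈ Icc (0 : ℝ) 1 := ⟨hx.trans hxy, hy⟩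
  have hg := quartic_strictAntiOn.antitoneOn ⟨hx, hxy.trans hy⟩ hy' hxy
  have hgy : y ^ 4 - y ^ 3 - y ^ 2 - y ≤ 0 := by
    simpa using quartic_strictAntiOn.antitoneOn ⟨le_rfl, zero_le_one⟩ hy' hy'.1
  calc (y ^ 4 - y ^ 3 - y ^ 2 - y) * y ^ m ≤ (y ^ 4 - y ^ 3 - y ^ 2 - y) * x ^ m :=
        mul_le_mul_of_nonpos_left (pow_le_pow_left₀ hx hxy m) hgy
    _ ≤ (x ^ 4 - x ^ 3 - x ^ 2 - x) * x ^ m := mul_le_mul_of_nonneg_right hg (pow_nonneg hx m)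

lemma strictAntiOn_aeval_Pm1 {n : ℕ} (hn : n ≠ 0) :
    StrictAntiOn (fun x : ℝ => aeval x (Pm1 n)) (Icc 0 1) := by
  intro x hx y hy hxy
  simp only [aeval_Pm1, add_lt_add_iff_left]
  refine Finset.sum_lt_sum (fun l _ => quartic_mul_pow_le hx.1 hxy.le hy.2 _)
    ⟨0, by simpa [Nat.pos_iff_ne_zero], ?_⟩
  simpa using quartic_strictAntiOn hx hy hxy

lemma existsUnique_root_Pm1_mem_Ioo {n : ℕ} (hn : n ≠ 0) :
    ∃! α : ℝ, α ∈ Ioo 0 1 ∧ aeval α (Pm1 n) = 0 := by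
  have hsign : (0 : ℝ) ∈ Ioo (aeval (1 : ℝ) (Pm1 n)) (aeval (0 : ℝ) (Pm1 n)) := by
    have : (1 : ℝ) ≤ n := Nat.one_le_cast.2 (Nat.pos_of_ne_zero hn)
    rw [mem_Ioo, aeval_Pm1_at_zero, aeval_Pm1_at_one]
    constructor <;> linarith
  obtain ⟨α, hα, hα0⟩ := intermediate_value_Ioo' zero_le_one
    (Polynomial.continuous_aeval (Pm1 n)).continuousOn hsign
  exact ⟨α, ⟨hα, hα0⟩, fun y ⟨hy, hy0⟩ => (strictAntiOn_aeval_Pm1 hn).injOn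
    (Ioo_subset_Icc_self hy) (Ioo_subset_Icc_self hα) (hy0.trans hα0.symm)⟩

lemma existsUnique_mem_Ioi_one_of_inv {p : ℝ → Prop} (hp : ∀ x ≠ 0, p x⁻¹ ↔ p x)
    (h : ∃! x, x ∈ Ioo 0 1 ∧ p x) : ∃! x, x ∈ Ioi 1 ∧ p x := by
  obtain ⟨α, ⟨⟨hα0, hα1⟩, hpα⟩, huniq⟩ := h
  refine ⟨α⁻¹, ⟨one_lt_inv₀ hα0 |>.2 hα1, (hp α hα0.ne').2 hpα⟩, fun y ⟨hy, hpy⟩ => ?_⟩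
  have hy0 : 0 < y := zero_lt_one.trans hy
  rw [← huniq y⁻¹ ⟨⟨inv_pos.2 hy0, inv_lt_one_of_one_lt₀ hy⟩, (hp y hy0.ne').2 hpy⟩, inv_inv]

/-- For every `k ≥ 0`, `P_k` has exactly one real root in `(0,1)`
and exactly one real root in `(1,∞)`. -/
theorem stmt_4 (k : ℕ) :
    (∃! α : ℝ, α ∈ Set.Ioo (0 : ℝ) 1 ∧ Polynomial.aeval α (Pm1 (k + 1)) = 0) ∧
    (∃! α' : ℝ, α' ∈ Set.Ioi (1 : ℝ) ∧ Polynomial.aeval α' (Pm1 (k + 1)) = 0) := by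
  have h := existsUnique_root_Pm1_mem_Ioo k.succ_ne_zero
  exact ⟨h, existsUnique_mem_Ioi_one_of_inv (p := fun x => aeval x (Pm1 (k + 1)) = 0)
    (fun x hx => aeval_inv_Pm1_eq_zero_iff hx _) h⟩
end

section
/- Fix k ≥ 0 and let α ∈ (0,1) and α' > 1 be the unique real roots of P_k in those intervals. Suppose P_k factorizes in ℤ[q] as a product P_k = P_{k,1} ⋯ P_{k,r} of irreducible polynomials, and suppose P_{k,1}(α) = 0. Then P_{k,1}(α') = 0, and for every i ≥ 2, every complex root of P_{k,i} is a root of unity. -/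
open Polynomial

/-!
Write `n = k + 1` and `P = Pm1 n`. Since
`(X⁴ - 1) P = X^(4n+4) - X^(4n+3) - X^(4n+2) - X^(4n+1) + X³ + X² + X - 1`, at `z = e^(2iψ)`
the value `(z⁴ - 1) P(z)` is `4i e^((4n+4)iψ)` times the real function
`cos((4n+1)ψ) sin 3ψ - sin((4n+1)ψ) cos ψ`. This function alternates in sign at `2n + 1`
explicit points of `(0, π/2)`; discarding the interval around `ψ = π/4` (where `z = i`), this
gives `2n - 1` roots of `P` on the upper unit semicircle. With their conjugates and `α, α'`
these are `4n = deg P` distinct roots: `P` is squarefree and its roots other than `α, α'` have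
absolute value `1`.

A factor of the monic `P` with `P(0) = 1` has unit leading and constant coefficients, so the
absolute values of its complex roots multiply to `1`. The factor vanishing at `α < 1` thus has a
root of absolute value `> 1`, which can only be `α'`. The other factors share no root with it, so
all their roots lie on the unit circle, and by Kronecker's theorem (Mahler measure `1`) they are
roots of unity.
-/

open Real Set

section IntegerPolynomial

variable {p q q' : ℤ[X]}

lemma norm_intCast_of_isUnit {u : ℤ} (hu : IsUnit u) : ‖(u : ℂ)‖ = 1 := by
  rw [Complex.norm_intCast, ← Int.cast_abs, Int.isUnit_iff_abs_eq.1 hu, Int.cast_one]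

lemma norm_leadingCoeff_map_of_isUnit (hlc : IsUnit q.leadingCoeff) :
    ‖(q.map (algebraMap ℤ ℂ)).leadingCoeff‖ = 1 := by
  rw [leadingCoeff_map_of_injective (RingHom.injective_int _), eq_intCast,
    norm_intCast_of_isUnit hlc]

lemma prod_norm_aroots_eq_one (hlc : IsUnit q.leadingCoeff) (h0 : IsUnit (q.eval 0)) :
    ((q.aroots ℂ).map (‖·‖)).prod = 1 := by
  have hvieta := congrArg (‖·‖)
    (IsAlgClosed.splits (q.map (algebraMap ℤ ℂ))).coeff_zero_eq_leadingCoeff_mul_prod_roots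
  rw [coeff_map, coeff_zero_eq_eval_zero, eq_intCast, norm_intCast_of_isUnit h0, norm_mul,
    norm_mul, norm_leadingCoeff_map_of_isUnit hlc, norm_pow, norm_neg, norm_one, one_pow, one_mul,
    one_mul] at hvieta
  rw [aroots_def, hvieta]
  exact (map_multiset_prod (normHom (α := ℂ)) _).symm

lemma exists_one_lt_norm_mem_aroots (hlc : IsUnit q.leadingCoeff) (h0 : IsUnit (q.eval 0))
    {z : ℂ} (hz : z ∈ q.aroots ℂ) (hz1 : ‖z‖ < 1) : ∃ w ∈ q.aroots ℂ, 1 < ‖w‖ := by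
  by_contra! h
  have hprod := prod_norm_aroots_eq_one hlc h0
  rw [← Multiset.cons_erase hz, Multiset.map_cons, Multiset.prod_cons] at hprod
  have hrest : (((q.aroots ℂ).erase z).map (‖·‖)).prod ≤ 1 := by
    calc _ ≤ (((q.aroots ℂ).erase z).map fun _ ↦ (1 : ℝ)).prod :=
          Multiset.prod_map_le_prod_map₀ _ _ (fun _ _ ↦ norm_nonneg _)
            fun w hw ↦ h w (Multiset.mem_of_mem_erase hw)
      _ = 1 := by simp
  nlinarith [norm_nonneg z]

lemma pow_eq_one_of_forall_norm_eq_one (hlc : IsUnit q.leadingCoeff)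
    (h : ∀ w ∈ q.aroots ℂ, ‖w‖ = 1) {z : ℂ} (hz : z ∈ q.aroots ℂ) : ∃ N, 0 < N ∧ z ^ N = 1 := by
  refine pow_eq_one_of_mahlerMeasure_eq_one ?_ (norm_ne_zero_iff.1 (by simp [h z hz])) hz
  rw [mahlerMeasure_eq_leadingCoeff_mul_prod_roots, ← algebraMap_int_eq,
    norm_leadingCoeff_map_of_isUnit hlc, one_mul]
  refine Multiset.prod_eq_one fun x hx ↦ ?_
  obtain ⟨w, hw, rfl⟩ := Multiset.mem_map.1 hx
  simp [h w hw]

lemma aroots_le_of_dvd (hp : p ≠ 0) (hdvd : q ∣ p) : q.aroots ℂ ≤ p.aroots ℂ :=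
  roots.le_of_dvd ((Polynomial.map_ne_zero_iff (RingHom.injective_int _)).2 hp)
    (Polynomial.map_dvd _ hdvd)

lemma disjoint_aroots_of_mul_dvd (hp : p ≠ 0) (hdvd : q * q' ∣ p) (hnd : (p.aroots ℂ).Nodup) :
    Disjoint (q.aroots ℂ) (q'.aroots ℂ) := by
  have hle := aroots_le_of_dvd hp hdvd
  rw [aroots_mul (ne_zero_of_dvd_ne_zero hp hdvd)] at hle
  exact (Multiset.nodup_add.1 (Multiset.nodup_of_le hle hnd)).2.2

lemma mem_aroots_of_dvd (hlc : IsUnit p.leadingCoeff) (h0 : IsUnit (p.eval 0)) {b : ℂ}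
    (hroots : ∀ z ∈ p.aroots ℂ, z = b ∨ ‖z‖ ≤ 1) (hdvd : q ∣ p) {a : ℂ} (ha : a ∈ q.aroots ℂ)
    (ha1 : ‖a‖ < 1) : b ∈ q.aroots ℂ := by
  obtain ⟨w, hw, hw1⟩ := exists_one_lt_norm_mem_aroots
    (isUnit_of_dvd_unit (leadingCoeff_dvd_leadingCoeff hdvd) hlc)
    (isUnit_of_dvd_unit (eval_dvd hdvd) h0) ha ha1
  have hp : p ≠ 0 := leadingCoeff_ne_zero.1 hlc.ne_zero
  rcases hroots w (Multiset.mem_of_le (aroots_le_of_dvd hp hdvd) hw) with rfl | h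
  · exact hw
  · linarith

lemma pow_eq_one_of_mul_dvd (hlc : IsUnit p.leadingCoeff) (hnd : (p.aroots ℂ).Nodup)
    (hroots : ∀ z ∈ p.aroots ℂ, z ∈ q.aroots ℂ ∨ ‖z‖ = 1) (hdvd : q * q' ∣ p) {z : ℂ}
    (hz : z ∈ q'.aroots ℂ) : ∃ N, 0 < N ∧ z ^ N = 1 := by
  have hp : p ≠ 0 := leadingCoeff_ne_zero.1 hlc.ne_zero
  have hq' : q' ∣ p := dvd_of_mul_left_dvd hdvd
  refine pow_eq_one_of_forall_norm_eq_one
    (isUnit_of_dvd_unit (leadingCoeff_dvd_leadingCoeff hq') hlc) (fun w hw ↦ ?_) hz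
  refine (hroots w (Multiset.mem_of_le (aroots_le_of_dvd hp hq') hw)).resolve_left fun hwq ↦ ?_
  exact Multiset.disjoint_left.1 (disjoint_aroots_of_mul_dvd hp hdvd hnd) hwq hw

end IntegerPolynomial

lemma roots_eq_of_natDegree_le_card {R : Type*} [CommRing R] [IsDomain R] {p : R[X]}
    (hp : p ≠ 0) {T : Finset R} (hT : ∀ z ∈ T, p.IsRoot z) (hcard : p.natDegree ≤ T.card) :
    p.roots = T.val :=
  (Multiset.eq_of_le_of_card_le ((Multiset.le_iff_subset T.nodup).2 fun z hz ↦
    (mem_roots hp).2 (hT z hz)) (p.card_roots'.trans hcard)).symm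

lemma aeval_ofReal_eq_zero {p : ℤ[X]} {x : ℝ} : aeval (x : ℂ) p = 0 ↔ aeval x p = 0 :=
  aeval_algebraMap_eq_zero_iff ℂ x p

lemma X_pow_four_sub_one_mul_Pm1 (n : ℕ) : (X ^ 4 - 1) * Pm1 n =
    X ^ (4 * n + 4) - X ^ (4 * n + 3) - X ^ (4 * n + 2) - X ^ (4 * n + 1) +
      X ^ 3 + X ^ 2 + X - 1 := by
  have hgeom := mul_geom_sum ((X : ℤ[X]) ^ 4) n
  simp_rw [Pm1, ← Finset.mul_sum, pow_mul] at hgeom ⊢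
  linear_combination (X ^ 4 - X ^ 3 - X ^ 2 - X) * hgeom

lemma monic_X_pow_four_sub_one : ((X : ℤ[X]) ^ 4 - 1).Monic := by monicity!

lemma Pm1_monic (n : ℕ) : (Pm1 n).Monic := by
  refine monic_X_pow_four_sub_one.of_mul_monic_left ?_
  rw [X_pow_four_sub_one_mul_Pm1]
  monicity!

lemma natDegree_Pm1_le (n : ℕ) : (Pm1 n).natDegree ≤ 4 * n := by
  have h := congrArg natDegree (X_pow_four_sub_one_mul_Pm1 n)
  rw [monic_X_pow_four_sub_one.natDegree_mul (Pm1_monic n)] at h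
  have h4 : natDegree ((X : ℤ[X]) ^ 4 - 1) = 4 := by compute_degree!
  have hQ : natDegree ((X : ℤ[X]) ^ (4 * n + 4) - X ^ (4 * n + 3) - X ^ (4 * n + 2) -
      X ^ (4 * n + 1) + X ^ 3 + X ^ 2 + X - 1) ≤ 4 * n + 4 := by compute_degree
  omega

lemma eval_zero_Pm1 (n : ℕ) : (Pm1 n).eval 0 = 1 := by
  simp [Pm1, eval_finsetSum]

noncomputable def circleProfile (n : ℕ) (ψ : ℝ) : ℝ :=
  cos ((4 * n + 1) * ψ) * sin (3 * ψ) - sin ((4 * n + 1) * ψ) * cos ψ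

open Complex in
lemma mul_aeval_Pm1_exp (n : ℕ) (ψ : ℝ) :
    (cexp (2 * ψ * I) ^ 4 - 1) * aeval (cexp (2 * ψ * I)) (Pm1 n) =
      4 * I * cexp (ψ * I) ^ (4 * n + 4) * circleProfile n ψ := by
  have hQ := congrArg (aeval (cexp (2 * ψ * I))) (X_pow_four_sub_one_mul_Pm1 n)
  simp only [map_mul, map_sub, map_add, map_pow, aeval_X, map_one] at hQ
  rw [hQ]
  set u := cexp (ψ * I)
  have hu0 : u ≠ 0 := Complex.exp_ne_zero _
  have hpow : ∀ (k : ℕ) (x : ℂ), x = k * ψ → cexp (x * I) = u ^ k := by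
    rintro k x rfl; rw [← Complex.exp_nat_mul]; ring_nf
  have hcos : ∀ (k : ℕ) (x : ℝ), x = k * ψ → (Real.cos x : ℂ) = (u ^ k + (u ^ k)⁻¹) / 2 := by
    rintro k x rfl
    rw [ofReal_cos, Complex.cos, hpow k _ (by push_cast; ring), neg_mul, Complex.exp_neg,
      hpow k _ (by push_cast; ring)]
  have hsin : ∀ (k : ℕ) (x : ℝ), x = k * ψ →
      (Real.sin x : ℂ) = (u ^ k - (u ^ k)⁻¹) / (2 * I) := by
    rintro k x rfl
    rw [ofReal_sin, Complex.sin, neg_mul, Complex.exp_neg, hpow k _ (by push_cast; ring)]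
    field_simp
    linear_combination (1 - (u ^ k) ^ 2) * I_sq
  rw [hpow 2 _ (by push_cast; ring), circleProfile, ofReal_sub, ofReal_mul, ofReal_mul,
    hcos (4 * n + 1) _ (by push_cast; ring), hsin 3 _ (by push_cast; ring),
    hsin (4 * n + 1) _ (by push_cast; ring), hcos 1 _ (by push_cast; ring)]
  field_simp
  ring_nf

lemma exists_zeros_of_sign_changes {f : ℝ → ℝ} (hf : Continuous f) {x : ℕ → ℝ} {N : ℕ}
    (hx : StrictMonoOn x (Iic N)) (hsign : ∀ t < N, f (x t) * f (x (t + 1)) < 0) :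
    ∃ c : ℕ → ℝ, StrictMonoOn c (Iio N) ∧
      ∀ t < N, c t ∈ Ioo (x t) (x (t + 1)) ∧ f (c t) = 0 := by
  have hzero : ∀ t < N, ∃ c ∈ Ioo (x t) (x (t + 1)), f c = 0 := by
    intro t ht
    have hlt : x t < x (t + 1) := hx (by simp; omega) (by simp; omega) (by omega)
    rcases mul_neg_iff.1 (hsign t ht) with ⟨h₁, h₂⟩ | ⟨h₁, h₂⟩
    · exact intermediate_value_Ioo' hlt.le hf.continuousOn ⟨h₂, h₁⟩
    · exact intermediate_value_Ioo hlt.le hf.continuousOn ⟨h₁, h₂⟩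
  choose! c hc hfc using hzero
  refine ⟨c, fun s hs t ht hst ↦ ?_, fun t ht ↦ ⟨hc t ht, hfc t ht⟩⟩
  simp only [mem_Iio] at hs ht
  calc c s < x (s + 1) := (hc s hs).2
    _ ≤ x t := hx.monotoneOn (by simp; omega) (by simp; omega) (by omega)
    _ < c t := (hc t ht).1

/-- At `(2t+1)π / (2(4n+1))` the value of `circleProfile n ψ` is `(-1)^(t+1) cos ψ`, and at the
last point `4nπ / (2(4n+1))` it is `sin 3ψ < 0`. -/
noncomputable def circleNode (n t : ℕ) : ℝ :=
  (if t < 2 * n then 2 * t + 1 else 4 * n : ℕ) * (π / (2 * (4 * n + 1)))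

variable {n : ℕ}

lemma circleNode_strictMonoOn : StrictMonoOn (circleNode n) (Iic (2 * n)) := by
  intro s hs t ht hst
  simp only [mem_Iic] at hs ht
  refine mul_lt_mul_of_pos_right ?_ (by positivity)
  exact_mod_cast (by split_ifs <;> omega)

lemma circleNode_of_lt {t : ℕ} (ht : t < 2 * n) :
    circleNode n t = (2 * t + 1) * π / (2 * (4 * n + 1)) := by
  simp [circleNode, ht, mul_div_assoc]

lemma zero_lt_circleNode_zero (hn : 1 ≤ n) : 0 < circleNode n 0 := by
  rw [circleNode_of_lt (by omega)]; positivity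

lemma circleNode_lt_pi_div_two : circleNode n (2 * n) < π / 2 := by
  rw [circleNode, if_neg (lt_irrefl _), mul_div, div_lt_div_iff₀ (by positivity) two_pos]
  push_cast
  nlinarith [pi_pos]

lemma circleNode_lt_pi_div_four (hn : 1 ≤ n) : circleNode n (n - 1) < π / 4 := by
  rw [circleNode_of_lt (by omega), div_lt_div_iff₀ (by positivity) four_pos,
    Nat.cast_sub hn]
  push_cast
  nlinarith [pi_pos]

lemma pi_div_four_lt_circleNode (hn : 1 ≤ n) : π / 4 < circleNode n n := by
  rw [circleNode_of_lt (by omega), div_lt_div_iff₀ four_pos (by positivity)]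
  nlinarith [pi_pos]

lemma circleNode_mem_Ioo (hn : 1 ≤ n) {t : ℕ} (ht : t ≤ 2 * n) :
    circleNode n t ∈ Ioo 0 (π / 2) := by
  have hmono := circleNode_strictMonoOn (n := n) |>.monotoneOn
  exact ⟨(zero_lt_circleNode_zero hn).trans_le (hmono (by simp) (by simpa) (Nat.zero_le t)),
    (hmono (by simpa) (by simp) ht).trans_lt circleNode_lt_pi_div_two⟩

lemma circleProfile_circleNode_sign (hn : 1 ≤ n) {t : ℕ} (ht : t ≤ 2 * n) :
    0 < (-1) ^ (t + 1) * circleProfile n (circleNode n t) := by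
  rcases ht.lt_or_eq with ht | rfl
  · have hm : (4 * n + 1) * circleNode n t = t * π + π / 2 := by
      rw [circleNode_of_lt ht]; field_simp
    have hcos : 0 < cos (circleNode n t) := by
      obtain ⟨h₀, h₁⟩ := circleNode_mem_Ioo hn ht.le
      exact cos_pos_of_mem_Ioo ⟨by linarith [pi_pos], h₁⟩
    rw [circleProfile, hm, cos_add_pi_div_two, sin_add_pi_div_two, sin_nat_mul_pi,
      cos_nat_mul_pi]
    calc (0 : ℝ) < ((-1) ^ t) ^ 2 * cos (circleNode n t) := by
          rw [← pow_mul, pow_mul', neg_one_sq, one_pow, one_mul]; exact hcos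
      _ = _ := by ring
  · have hm : (4 * n + 1) * circleNode n (2 * n) = (2 * n : ℕ) * π := by
      simp only [circleNode, lt_irrefl, if_false]; push_cast; field_simp; norm_num
    have hq : (2 * n + 2 : ℝ) / (4 * n + 1) < 1 := by
      rw [div_lt_one (by positivity)]; norm_cast; omega
    have h3 : 3 * circleNode n (2 * n) - 2 * π = -(π * ((2 * n + 2) / (4 * n + 1))) := by
      simp only [circleNode, lt_irrefl, if_false]; push_cast; field_simp; ring
    have hsin : sin (3 * circleNode n (2 * n)) < 0 := by
      rw [← sin_sub_two_pi, h3]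
      refine sin_neg_of_neg_of_neg_pi_lt (neg_neg_of_pos (by positivity)) ?_
      nlinarith [pi_pos]
    rw [circleProfile, hm, cos_nat_mul_pi, sin_nat_mul_pi, pow_succ, pow_mul]
    simp only [neg_one_sq, one_pow]
    linarith

lemma continuous_circleProfile : Continuous (circleProfile n) := by
  unfold circleProfile; fun_prop

lemma exists_circleProfile_zeros (hn : 1 ≤ n) : ∃ Z : Finset ℝ, Z.card = 2 * n - 1 ∧
    ∀ ψ ∈ Z, ψ ∈ Ioo 0 (π / 2) ∧ ψ ≠ π / 4 ∧ circleProfile n ψ = 0 := by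
  obtain ⟨c, hc_mono, hc⟩ := exists_zeros_of_sign_changes continuous_circleProfile
    (circleNode_strictMonoOn (n := n)) fun t ht ↦ by
      have h₁ := circleProfile_circleNode_sign hn (t := t) (by omega)
      have h₂ := circleProfile_circleNode_sign hn (t := t + 1) (by omega)
      have hodd : (-1 : ℝ) ^ (t + 1) * (-1) ^ (t + 1 + 1) = -1 := by
        rw [← pow_add]; exact Odd.neg_one_pow ⟨t + 1, by ring⟩
      linear_combination mul_pos h₁ h₂ + hodd * circleProfile n (circleNode n t) *
        circleProfile n (circleNode n (t + 1))
  have hmono := circleNode_strictMonoOn (n := n) |>.monotoneOn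
  -- the zero between `circleNode n (n - 1)` and `circleNode n n` may be `π / 4`, where
  -- `exp (2ψi) = i` is a root of `X ^ 4 - 1` rather than of `Pm1 n`
  refine ⟨((Finset.range (2 * n)).erase (n - 1)).image c, ?_, ?_⟩
  · rw [Finset.card_image_of_injOn
        (hc_mono.injOn.mono fun _ ht ↦ Finset.mem_range.1 (Finset.mem_of_mem_erase ht)),
      Finset.card_erase_of_mem (Finset.mem_range.2 (by omega)), Finset.card_range]
  · simp only [Finset.mem_image, Finset.mem_erase, Finset.mem_range]
    rintro _ ⟨t, ⟨htn, ht⟩, rfl⟩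
    obtain ⟨⟨hlo, hhi⟩, hzero⟩ := hc t ht
    refine ⟨⟨?_, ?_⟩, ?_, hzero⟩
    · linarith [(circleNode_mem_Ioo hn (t := t) (by omega)).1]
    · linarith [(circleNode_mem_Ioo hn (t := t + 1) (by omega)).2]
    · rcases Nat.lt_or_ge t (n - 1) with h | h
      · linarith [circleNode_lt_pi_div_four hn, hmono (a := t + 1) (b := n - 1) (by simp; omega)
          (by simp; omega) (by omega)]
      · linarith [pi_div_four_lt_circleNode hn, hmono (a := n) (b := t) (by simp; omega)
          (by simp; omega) (by omega)]

open Complex in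
lemma aeval_Pm1_exp_eq_zero {ψ : ℝ} (hψ : ψ ∈ Ioo 0 (π / 2)) (hψ4 : ψ ≠ π / 4)
    (hzero : circleProfile n ψ = 0) : aeval (cexp (2 * ψ * I)) (Pm1 n) = 0 := by
  have hfour : cexp (2 * ψ * I) ^ 4 ≠ 1 := by
    rw [← Complex.exp_nat_mul, Ne, Complex.exp_eq_one_iff]
    rintro ⟨k, hk⟩
    have hkψ : 8 * ψ = k * (2 * π) := by
      have := congrArg Complex.im hk
      simp only [Nat.cast_ofNat, mul_im, ofReal_re, I_im, ofReal_im, I_re, mul_re, re_ofNat,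
        im_ofNat, intCast_re, intCast_im] at this
      linarith
    have h₀ : (0 : ℤ) < k := by exact_mod_cast (show (0 : ℝ) < k by nlinarith [pi_pos, hψ.1])
    have h₂ : k < 2 := by exact_mod_cast (show (k : ℝ) < 2 by nlinarith [pi_pos, hψ.2])
    obtain rfl : k = 1 := by omega
    apply hψ4
    push_cast at hkψ
    linarith
  have h := mul_aeval_Pm1_exp n ψ
  rw [hzero, ofReal_zero, mul_zero] at h
  exact (mul_eq_zero.1 h).resolve_left (sub_ne_zero.2 hfour)

lemma exists_roots_Pm1_upperHalfPlane (hn : 1 ≤ n) : ∃ s : Finset ℂ, s.card = 2 * n - 1 ∧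
    ∀ z ∈ s, 0 < z.im ∧ ‖z‖ = 1 ∧ aeval z (Pm1 n) = 0 := by
  obtain ⟨Z, hcard, hZ⟩ := exists_circleProfile_zeros hn
  have hexp : ∀ ψ : ℝ,
      Complex.exp (2 * ψ * Complex.I) = Complex.exp ((2 * ψ : ℝ) * Complex.I) := by
    intro ψ; push_cast; rfl
  refine ⟨Z.image fun ψ : ℝ ↦ Complex.exp (2 * ψ * Complex.I), ?_, ?_⟩
  · rw [Finset.card_image_of_injOn, hcard]
    intro ψ hψ ψ' hψ' h
    obtain ⟨⟨h₀, h₁⟩, -⟩ := hZ ψ hψ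
    obtain ⟨⟨h₀', h₁'⟩, -⟩ := hZ ψ' hψ'
    have hcos := congrArg Complex.re h
    simp only [hexp, Complex.exp_ofReal_mul_I_re] at hcos
    have := injOn_cos ⟨by linarith, by linarith⟩ ⟨by linarith, by linarith⟩ hcos
    linarith
  · simp only [Finset.mem_image]
    rintro _ ⟨ψ, hψ, rfl⟩
    obtain ⟨hψ, hψ4, hzero⟩ := hZ ψ hψ
    refine ⟨?_, ?_, aeval_Pm1_exp_eq_zero hψ hψ4 hzero⟩
    · rw [hexp, Complex.exp_ofReal_mul_I_im]
      exact sin_pos_of_pos_of_lt_pi (by linarith [hψ.1]) (by linarith [hψ.2])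
    · rw [hexp, Complex.norm_exp_ofReal_mul_I]

theorem aroots_Pm1 (hn : 1 ≤ n) {α α' : ℝ} (hα : α ∈ Ioo 0 1) (hαr : aeval α (Pm1 n) = 0)
    (hα' : 1 < α') (hα'r : aeval α' (Pm1 n) = 0) :
    ((Pm1 n).aroots ℂ).Nodup ∧ ∀ z ∈ (Pm1 n).aroots ℂ, z = α ∨ z = α' ∨ ‖z‖ = 1 := by
  obtain ⟨s, hcard, hs⟩ := exists_roots_Pm1_upperHalfPlane hn
  set T := s ∪ s.image (starRingEnd ℂ) ∪ {(α : ℂ), (α' : ℂ)}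
  have hTcard : T.card = 4 * n := by
    have hdisj : Disjoint s (s.image (starRingEnd ℂ)) := by
      refine Finset.disjoint_left.2 fun z hz hz' ↦ ?_
      obtain ⟨w, hw, rfl⟩ := Finset.mem_image.1 hz'
      linarith [(hs _ hz).1, (hs w hw).1, Complex.conj_im w]
    have hdisj' : Disjoint (s ∪ s.image (starRingEnd ℂ)) {(α : ℂ), (α' : ℂ)} := by
      refine Finset.disjoint_right.2 fun z hz hz' ↦ ?_
      have him : z.im = 0 := by
        rcases Finset.mem_insert.1 hz with rfl | hz <;> simp_all
      rcases Finset.mem_union.1 hz' with h | h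
      · linarith [(hs z h).1]
      · obtain ⟨w, hw, rfl⟩ := Finset.mem_image.1 h
        linarith [(hs w hw).1, Complex.conj_im w]
    have hαα' : (α : ℂ) ≠ α' := Complex.ofReal_injective.ne (by linarith [hα.2])
    rw [Finset.card_union_of_disjoint hdisj', Finset.card_union_of_disjoint hdisj,
      Finset.card_image_of_injective _ (RingHom.injective _), Finset.card_pair hαα', hcard]
    omega
  have hroots : (Pm1 n).aroots ℂ = T.val := by
    refine roots_eq_of_natDegree_le_card ((Pm1_monic n).map _).ne_zero (fun z hz ↦ ?_) ?_
    · rw [IsRoot.def, eval_map_algebraMap]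
      simp only [T, Finset.mem_union, Finset.mem_image, Finset.mem_insert,
        Finset.mem_singleton] at hz
      rcases hz with (hz | ⟨w, hw, rfl⟩) | rfl | rfl
      · exact (hs z hz).2.2
      · rw [← RingHom.toIntAlgHom_apply, aeval_algHom_apply, (hs w hw).2.2, map_zero]
      · exact aeval_ofReal_eq_zero.2 hαr
      · exact aeval_ofReal_eq_zero.2 hα'r
    · rw [hTcard]
      exact natDegree_map_le.trans (natDegree_Pm1_le n)
  rw [hroots]
  refine ⟨T.nodup, fun z hz ↦ ?_⟩
  simp only [T, Finset.mem_val, Finset.mem_union, Finset.mem_image, Finset.mem_insert,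
    Finset.mem_singleton] at hz
  rcases hz with (hz | ⟨w, hw, rfl⟩) | rfl | rfl
  · exact Or.inr (Or.inr (hs z hz).2.1)
  · exact Or.inr (Or.inr ((Complex.norm_conj w).trans (hs w hw).2.1))
  · exact Or.inl rfl
  · exact Or.inr (Or.inl rfl)

theorem stmt_6_general (k : ℕ) (α α' : ℝ)
    (hα : α ∈ Set.Ioo (0 : ℝ) 1) (hαr : Polynomial.aeval α (Pm1 (k + 1)) = 0)
    (hα' : 1 < α') (hα'r : Polynomial.aeval α' (Pm1 (k + 1)) = 0)
    (r : ℕ) (F : Fin (r + 1) → Polynomial ℤ)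
    (hprod : Pm1 (k + 1) = ∏ i, F i)
    (h1 : Polynomial.aeval α (F 0) = 0) :
    Polynomial.aeval α' (F 0) = 0 ∧
    ∀ i, i ≠ 0 → ∀ β : ℂ, Polynomial.aeval β (F i) = 0 →
      ∃ N : ℕ, 0 < N ∧ β ^ N = 1 := by
  have hmonic := Pm1_monic (k + 1)
  have hlc : IsUnit (Pm1 (k + 1)).leadingCoeff := hmonic.leadingCoeff ▸ isUnit_one
  obtain ⟨hnd, hroots⟩ := aroots_Pm1 (by omega) hα hαr hα' hα'r
  have hdvd : ∀ i, F i ∣ Pm1 (k + 1) := fun i ↦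
    hprod ▸ Finset.dvd_prod_of_mem F (Finset.mem_univ i)
  have hmem : ∀ i {z : ℂ}, aeval z (F i) = 0 → z ∈ (F i).aroots ℂ := fun i _ hz ↦
    mem_aroots.2 ⟨ne_zero_of_dvd_ne_zero hmonic.ne_zero (hdvd i), hz⟩
  have hα0 := hmem 0 (aeval_ofReal_eq_zero.2 h1)
  have hα'0 : (α' : ℂ) ∈ (F 0).aroots ℂ := by
    refine mem_aroots_of_dvd hlc (by rw [eval_zero_Pm1]; exact isUnit_one) (fun z hz ↦ ?_)
      (hdvd 0) hα0 (by simp [abs_of_pos hα.1, hα.2])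
    rcases hroots z hz with rfl | rfl | h
    · exact Or.inr (by simp [abs_of_pos hα.1, hα.2.le])
    · exact Or.inl rfl
    · exact Or.inr h.le
  refine ⟨aeval_ofReal_eq_zero.1 (mem_aroots.1 hα'0).2, fun i hi β hβ ↦ ?_⟩
  refine pow_eq_one_of_mul_dvd (q := F 0) hlc hnd (fun z hz ↦ ?_) ?_ (hmem i hβ)
  · rcases hroots z hz with rfl | rfl | h
    · exact Or.inl hα0
    · exact Or.inl hα'0
    · exact Or.inr h
  · rw [hprod, ← Finset.mul_prod_erase _ _ (Finset.mem_univ 0)]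
    exact mul_dvd_mul_left _
      (Finset.dvd_prod_of_mem _ (Finset.mem_erase.2 ⟨hi, Finset.mem_univ i⟩))

/-- If `P_k = P_{k,1} ⋯ P_{k,r}` is a factorization into irreducibles in
`ℤ[q]` and `P_{k,1}(α) = 0` for the unique root `α ∈ (0,1)`, then `P_{k,1}(α') = 0` for the
unique root `α' > 1`, and every complex root of each `P_{k,i}`, `i ≥ 2`, is a root of unity. -/
theorem stmt_6 (k : ℕ) (α α' : ℝ)
    (hα : α ∈ Set.Ioo (0 : ℝ) 1) (hαr : Polynomial.aeval α (Pm1 (k + 1)) = 0)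
    (hα' : 1 < α') (hα'r : Polynomial.aeval α' (Pm1 (k + 1)) = 0)
    (r : ℕ) (F : Fin (r + 1) → Polynomial ℤ)
    (hirr : ∀ i, Irreducible (F i))
    (hprod : Pm1 (k + 1) = ∏ i, F i)
    (h1 : Polynomial.aeval α (F 0) = 0) :
    Polynomial.aeval α' (F 0) = 0 ∧
    ∀ i, i ≠ 0 → ∀ β : ℂ, Polynomial.aeval β (F i) = 0 →
      ∃ N : ℕ, 0 < N ∧ β ^ N = 1 :=
  stmt_6_general k α α' hα hαr hα' hα'r r F hprod h1
end

section
/- For every k ≥ 1, the polynomial p_{k-1} satisfies p_{k-1}(0) = (−1)^k (2k+1) and p'_{k-1}(0) = (−1)^k k, where p'_{k-1} denotes the formal derivative. -/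
open Polynomial

/-!
At `x = 0` the recurrence factor `x² − 2` equals `−2` and its derivative `2x` vanishes, so both
`p_k(0)` and `p'_k(0)` satisfy `a_{k+2} = −2 a_{k+1} − a_k`, whose characteristic polynomial is
`(t + 1)²`. Hence both are of the form `(−1)^k (c + d k)`, with `c, d` read off from `p₀` and `p₁`.
-/

theorem eq_neg_one_pow_mul_of_add_two {R : Type*} [CommRing R] (a : ℕ → R)
    (h : ∀ n, a (n + 2) = -2 * a (n + 1) - a n) (n : ℕ) :
    a n = (-1) ^ n * (a 0 - (a 0 + a 1) * n) := by
  induction n using Nat.twoStepInduction with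
  | zero => simp
  | one => ring
  | more n ih₀ ih₁ =>
    rw [h, ih₀, ih₁]
    push_cast
    ring

theorem pp_eval_zero_add_two (n : ℕ) :
    (pp (n + 2)).eval 0 = -2 * (pp (n + 1)).eval 0 - (pp n).eval 0 := by
  simp [pp]

theorem pp_derivative_eval_zero_add_two (n : ℕ) :
    (derivative (pp (n + 2))).eval 0 =
      -2 * (derivative (pp (n + 1))).eval 0 - (derivative (pp n)).eval 0 := by
  simp [pp]

/-- For every `k ≥ 1`, `p_{k-1}(0) = (−1)^k (2k+1)` and
`p′_{k-1}(0) = (−1)^k k`. -/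
theorem stmt_12 (k : ℕ) (hk : 1 ≤ k) :
    Polynomial.eval (0 : ℤ) (pp (k - 1)) = (-1) ^ k * (2 * (k : ℤ) + 1) ∧
    Polynomial.eval (0 : ℤ) (Polynomial.derivative (pp (k - 1))) = (-1) ^ k * (k : ℤ) := by
  obtain ⟨n, rfl⟩ := Nat.exists_eq_add_of_le' hk
  rw [Nat.add_sub_cancel,
    eq_neg_one_pow_mul_of_add_two (fun n ↦ (pp n).eval 0) pp_eval_zero_add_two,
    eq_neg_one_pow_mul_of_add_two (fun n ↦ (derivative (pp n)).eval 0)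
      pp_derivative_eval_zero_add_two]
  simp only [pp, derivative_sub, derivative_mul, derivative_add, derivative_X_pow, derivative_X,
    derivative_ofNat, derivative_one, eval_sub, eval_mul, eval_add, eval_pow, eval_X, eval_ofNat,
    eval_one, eval_zero]
  push_cast
  constructor <;> ring
end

section
/- Let p be a prime number and let α be a nonzero element of an algebraic closure of 𝔽_p = ℤ/pℤ. Then α + α^{−1} lies in (the image of) 𝔽_p if and only if α^{p−1} = 1 or α^{p+1} = 1. -/
/-!
The elements of the prime field are exactly the fixed points of Frobenius `x ↦ x ^ p`, and
Frobenius sends `α + α⁻¹` to `α ^ p + (α ^ p)⁻¹`. Since `a + a⁻¹ = b + b⁻¹` forces `a = b` or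
`a = b⁻¹` (the difference factors as `(a - b)(ab - 1) / ab`), `α + α⁻¹` is fixed by Frobenius
exactly when `α ^ p = α` or `α ^ p = α⁻¹`.
-/

theorem add_inv_eq_add_inv_iff {K : Type*} [Field K] {a b : K} (ha : a ≠ 0) (hb : b ≠ 0) :
    a + a⁻¹ = b + b⁻¹ ↔ a = b ∨ a = b⁻¹ := by
  have hab : a + a⁻¹ - (b + b⁻¹) = (a - b) * (a * b - 1) / (a * b) := by
    field_simp
    ring
  rw [← sub_eq_zero, hab, div_eq_zero_iff, mul_eq_zero, sub_eq_zero, sub_eq_zero,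
    mul_eq_one_iff_eq_inv₀ hb]
  simp [ha, hb]

theorem pow_eq_self_iff_pow_sub_one_eq_one {G₀ : Type*} [GroupWithZero G₀] {a : G₀}
    (ha : a ≠ 0) {n : ℕ} (hn : n ≠ 0) : a ^ n = a ↔ a ^ (n - 1) = 1 := by
  rw [← mul_eq_right₀ ha, ← pow_succ, Nat.sub_add_cancel (Nat.one_le_iff_ne_zero.mpr hn)]

theorem pow_eq_inv_iff_pow_add_one_eq_one {G₀ : Type*} [GroupWithZero G₀] {a : G₀}
    (ha : a ≠ 0) (n : ℕ) :
    a ^ n = a⁻¹ ↔ a ^ (n + 1) = 1 := by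
  rw [pow_succ, mul_eq_one_iff_eq_inv₀ ha]

theorem exists_algebraMap_zmod_eq_iff_pow_eq_self (p : ℕ) [Fact p.Prime] {F : Type*} [Field F]
    [Algebra (ZMod p) F] (x : F) : (∃ a : ZMod p, x = algebraMap (ZMod p) F a) ↔ x ^ p = x := by
  have : CharP F p := charP_of_injective_algebraMap (algebraMap (ZMod p) F).injective p
  rw [← Subfield.mem_bot_iff_pow_eq_self F p, ← ZMod.fieldRange_castHom_eq_bot p,
    Subsingleton.elim (ZMod.castHom dvd_rfl F) (algebraMap (ZMod p) F)]
  exact exists_congr fun _ ↦ eq_comm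

/-- For a prime `p` and a nonzero `α` in an algebraic closure of `𝔽_p`,
`α + α⁻¹` lies in (the image of) `𝔽_p` iff `α^{p−1} = 1` or `α^{p+1} = 1`. -/
theorem stmt_15 (p : ℕ) [Fact p.Prime] (α : AlgebraicClosure (ZMod p)) (hα : α ≠ 0) :
    (∃ a : ZMod p, α + α⁻¹ = algebraMap (ZMod p) (AlgebraicClosure (ZMod p)) a) ↔
      α ^ (p - 1) = 1 ∨ α ^ (p + 1) = 1 := by
  have frobenius_add_inv : (α + α⁻¹) ^ p = α ^ p + (α ^ p)⁻¹ := by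
    rw [add_pow_char, inv_pow]
  rw [exists_algebraMap_zmod_eq_iff_pow_eq_self, frobenius_add_inv,
    add_inv_eq_add_inv_iff (pow_ne_zero p hα) hα,
    pow_eq_self_iff_pow_sub_one_eq_one hα (Fact.out : p.Prime).ne_zero,
    pow_eq_inv_iff_pow_add_one_eq_one hα]
end

section
/- Fix k ≥ 2 such that p := 2k+1 is a prime with p ≠ 3, and let Q_{k-1}(q) = P_{k-1}(q)·(q^4 − 1). Working in 𝔽_p[q] with the reductions of these polynomials modulo p: (1) gcd(q^{p−1} − 1, Q_{k-1}(q)) divides q^4 − 1; and (2) gcd(q^{p+1} − 1, Q_{k-1}(q)) divides (q^4 − 1)(q^3 − 1). -/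
/-!
Write `A = X⁴ − X³ − X² − X`. Summing the geometric series gives
`Q_{k-1} = (X⁴ − 1) + A·(X^{4k} − 1)`. With `p − 1 = 2k`, `X^{p−1} − 1` divides
`X^{4k} − 1`, so a common divisor of `X^{p−1} − 1` and `Q_{k-1}` divides `X⁴ − 1`.
With `p + 1 = 2k + 2`, `X^{p+1} − 1` divides `X^{4k+4} − 1`, and
`X⁴·Q_{k-1} = X·(X⁴ − 1)(X² + X + 1) + A·(X^{4k+4} − 1)`; a common divisor of
`X^{p+1} − 1` and `Q_{k-1}` is coprime to `X`, hence divides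
`(X⁴ − 1)(X² + X + 1)`, a divisor of `(X⁴ − 1)(X³ − 1)`.
-/

open Polynomial

/-- `Q_{k-1}(q) = P_{k-1}(q)·(q⁴ − 1)`; here `Qm1 k` denotes `Q_{k-1}`. -/
noncomputable def Qm1 (k : ℕ) : Polynomial ℤ := Pm1 k * (X ^ 4 - 1)

lemma Qm1_eq (k : ℕ) :
    Qm1 k = (X ^ 4 - 1) + (X ^ 4 - X ^ 3 - X ^ 2 - X) * (X ^ (4 * k) - 1) := by
  have geom : (∑ l ∈ Finset.range k, (X : ℤ[X]) ^ (4 * l)) * (X ^ 4 - 1) = X ^ (4 * k) - 1 := by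
    simp only [pow_mul]
    exact geom_sum_mul _ k
  rw [Qm1, Pm1, ← Finset.mul_sum, add_mul, one_mul, mul_assoc, geom]

section CommRing

variable {R : Type*} [CommRing R]

lemma map_Qm1 (f : ℤ →+* R) (k : ℕ) :
    (Qm1 k).map f = (X ^ 4 - 1) + (X ^ 4 - X ^ 3 - X ^ 2 - X) * (X ^ (4 * k) - 1) := by
  simp [Qm1_eq]

lemma dvd_X_pow_four_sub_one_of_dvd_map_Qm1 (f : ℤ →+* R) {k : ℕ} {d : R[X]}
    (hd : d ∣ X ^ (2 * k) - 1) (hQ : d ∣ (Qm1 k).map f) : d ∣ X ^ 4 - 1 := by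
  have hdiff : (X ^ (2 * k) - 1 : R[X]) ∣ X ^ (4 * k) - 1 := by
    simpa [← pow_mul, show 2 * k * 2 = 4 * k by ring]
      using sub_one_dvd_pow_sub_one (X ^ (2 * k) : R[X]) 2
  rw [map_Qm1] at hQ
  exact (dvd_add_left ((hd.trans hdiff).mul_left _)).mp hQ

lemma X_pow_four_mul_map_Qm1 (f : ℤ →+* R) (k : ℕ) :
    X ^ 4 * (Qm1 k).map f = X * ((X ^ 4 - 1) * (X ^ 2 + X + 1))
      + (X ^ 4 - X ^ 3 - X ^ 2 - X) * (X ^ (4 * k + 4) - 1) := by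
  rw [map_Qm1, pow_add]
  ring

lemma dvd_X_pow_four_sub_one_mul_X_pow_three_sub_one_of_dvd_map_Qm1 (f : ℤ →+* R) {k : ℕ}
    {d : R[X]} (hd : d ∣ X ^ (2 * k + 2) - 1) (hQ : d ∣ (Qm1 k).map f) :
    d ∣ (X ^ 4 - 1) * (X ^ 3 - 1) := by
  have hdiff : (X ^ (2 * k + 2) - 1 : R[X]) ∣ X ^ (4 * k + 4) - 1 := by
    simpa [← pow_mul, show (2 * k + 2) * 2 = 4 * k + 4 by ring]
      using sub_one_dvd_pow_sub_one (X ^ (2 * k + 2) : R[X]) 2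
  have hX : d ∣ X * ((X ^ 4 - 1) * (X ^ 2 + X + 1)) := by
    have := hQ.mul_left (X ^ 4)
    rw [X_pow_four_mul_map_Qm1] at this
    exact (dvd_add_left ((hd.trans hdiff).mul_left _)).mp this
  have hcop : IsCoprime (X : R[X]) d :=
    IsCoprime.of_isCoprime_of_dvd_right ⟨X ^ (2 * k + 1), -1, by ring⟩ hd
  exact (hcop.symm.dvd_of_dvd_mul_left hX).trans (mul_dvd_mul_left _ ⟨X - 1, by ring⟩)

end CommRing

theorem stmt_16_general (k : ℕ) [hp : Fact (Nat.Prime (2 * k + 1))] :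
    (EuclideanDomain.gcd (X ^ (2 * k + 1 - 1) - 1)
        ((Qm1 k).map (Int.castRingHom (ZMod (2 * k + 1)))) ∣
      (X ^ 4 - 1 : Polynomial (ZMod (2 * k + 1)))) ∧
    (EuclideanDomain.gcd (X ^ (2 * k + 1 + 1) - 1)
        ((Qm1 k).map (Int.castRingHom (ZMod (2 * k + 1)))) ∣
      ((X ^ 4 - 1) * (X ^ 3 - 1) : Polynomial (ZMod (2 * k + 1)))) := by
  rw [Nat.add_sub_cancel, add_assoc]
  exact ⟨dvd_X_pow_four_sub_one_of_dvd_map_Qm1 _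
      (EuclideanDomain.gcd_dvd_left _ _) (EuclideanDomain.gcd_dvd_right _ _),
    dvd_X_pow_four_sub_one_mul_X_pow_three_sub_one_of_dvd_map_Qm1 _
      (EuclideanDomain.gcd_dvd_left _ _) (EuclideanDomain.gcd_dvd_right _ _)⟩

/-- For `k ≥ 2` with `p := 2k+1` prime, `p ≠ 3`, working in `𝔽_p[q]`:
(1) `gcd(q^{p−1} − 1, Q_{k-1}) ∣ q⁴ − 1`; (2) `gcd(q^{p+1} − 1, Q_{k-1}) ∣ (q⁴−1)(q³−1)`. -/
theorem stmt_16 (k : ℕ) (hk : 2 ≤ k) [hp : Fact (Nat.Prime (2 * k + 1))]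
    (hne : 2 * k + 1 ≠ 3) :
    (EuclideanDomain.gcd (X ^ (2 * k + 1 - 1) - 1)
        ((Qm1 k).map (Int.castRingHom (ZMod (2 * k + 1)))) ∣
      (X ^ 4 - 1 : Polynomial (ZMod (2 * k + 1)))) ∧
    (EuclideanDomain.gcd (X ^ (2 * k + 1 + 1) - 1)
        ((Qm1 k).map (Int.castRingHom (ZMod (2 * k + 1)))) ∣
      ((X ^ 4 - 1) * (X ^ 3 - 1) : Polynomial (ZMod (2 * k + 1)))) :=
  stmt_16_general k (hp := hp)
end
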